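/- Let ψ : Fin 2 × Fin 2 → ℂ be a unit vector (a pure state of two qubits) and let M be the 2×2 complex matrix with entries M_{ab} = ψ(a,b). Then the General Entanglement of ψ equals the square of Wootters' concurrence: 2 − 2·Tr((M Mᴴ)²) = 4·|det M|². Equivalently, 1 − Tr((M Mᴴ)²) = 2·|det M|². -/

import Mathlib

/-!
The reduced density matrix `ρ = M Mᴴ` is a 2×2 matrix, so Cayley–Hamilton gives
`Tr(ρ²) = (Tr ρ)² − 2 det ρ`. Normalisation of `ψ` is `Tr ρ = 1`, and
`det ρ = det M · conj (det M) = |det M|²`.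
-/

open Matrix

namespace Matrix

theorem trace_mul_self_fin_two {R : Type*} [CommRing R] (A : Matrix (Fin 2) (Fin 2) R) :
    (A * A).trace = A.trace ^ 2 - 2 * A.det := by
  simp only [trace_fin_two, det_fin_two, mul_apply, Fin.sum_univ_two]
  ring

variable {𝕜 : Type*} [RCLike 𝕜]

theorem trace_mul_conjTranspose_self_eq_sum_norm_sq {m n : Type*} [Fintype m] [Fintype n]
    (A : Matrix m n 𝕜) : (A * Aᴴ).trace = ∑ i, ∑ j, (‖A i j‖ : 𝕜) ^ 2 := by
  simp only [trace, diag_apply, mul_apply, conjTranspose_apply, RCLike.star_def,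
    RCLike.mul_conj]

theorem det_mul_conjTranspose_self {n : Type*} [Fintype n] [DecidableEq n]
    (A : Matrix n n 𝕜) : (A * Aᴴ).det = (‖A.det‖ : 𝕜) ^ 2 := by
  rw [det_mul, det_conjTranspose, RCLike.star_def, RCLike.mul_conj]

end Matrix

/-- For a two-qubit pure state `ψ` with associated matrix `M`, the General
Entanglement equals the squared Wootters concurrence:
`2 − 2 Tr((M Mᴴ)²) = 4 |det M|²`; equivalently
`1 − Tr((M Mᴴ)²) = 2 |det M|²`. -/
theorem general_entanglement_eq_concurrence_sq
    (ψ : Fin 2 × Fin 2 → ℂ) (hψ : ∑ q, ‖ψ q‖ ^ 2 = 1)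
    (M : Matrix (Fin 2) (Fin 2) ℂ) (hM : ∀ a b, M a b = ψ (a, b)) :
    2 - 2 * ((M * M.conjTranspose) * (M * M.conjTranspose)).trace
        = 4 * ((‖M.det‖ : ℂ)) ^ 2 ∧
    1 - ((M * M.conjTranspose) * (M * M.conjTranspose)).trace
        = 2 * ((‖M.det‖ : ℂ)) ^ 2 := by
  have htrace : (M * Mᴴ).trace = 1 := by
    rw [trace_mul_conjTranspose_self_eq_sum_norm_sq, RCLike.ofReal_eq_complex_ofReal]
    simp only [hM]
    exact_mod_cast (Fintype.sum_prod_type _).symm.trans hψ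
  have hpurity : 1 - ((M * Mᴴ) * (M * Mᴴ)).trace = 2 * (‖M.det‖ : ℂ) ^ 2 := by
    rw [trace_mul_self_fin_two, htrace, det_mul_conjTranspose_self,
      RCLike.ofReal_eq_complex_ofReal]
    ring
  exact ⟨by linear_combination 2 * hpurity, hpurity⟩
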